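/- Let H, V be a Hilbert space and a closed subspace, and let a(·,·) be a bounded sesquilinear form on H such that a(u,v) + α(u,v)_{L²} is coercive on H for some α > 0 (Gårding inequality), with the embedding used in (u,v)_{L²} compact. Suppose w ∈ H and w_N ∈ V satisfy the Galerkin orthogonality a(w − w_N, v) = 0 for all v ∈ V, and suppose the duality estimate ‖w − w_N‖_{L²} ≤ ε_N ‖w − w_N‖_H holds with ε_N → 0. Then for ε_N small enough, ‖w − w_N‖_H ≤ C ‖w − Π w‖_H, where Π is any projection of H onto V and C is independent of N. -/

import Mathlib

open Filter

/-!
Galerkin orthogonality turns `a(e, e)`, `e = w - w_N`, into `a(e, w - Π w)`, which the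
boundedness of `a` controls by `M ‖e‖ ‖w - Π w‖`. From below, the Gårding inequality bounds
`‖a(e, e)‖` by `β ‖e‖² - |α| ‖e‖²_L`, and the duality estimate `‖e‖_L ≤ ε_N ‖e‖` lets the
lower-order term be absorbed as soon as `|α| ε_N² ≤ β / 2`, leaving `‖e‖ ≤ (2M / β) ‖w - Π w‖`.
-/

section GalerkinError

variable {H : Type*}

theorem half_mul_sq_norm_le_of_garding [Norm H] (a : H → H → ℂ) {nL : H → ℝ} {α β ε : ℝ}
    {u : H} (hgarding : β * ‖u‖ ^ 2 ≤ ‖a u u + (α * nL u ^ 2 : ℝ)‖) (hnL0 : 0 ≤ nL u)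
    (hduality : nL u ≤ ε * ‖u‖) (hsmall : |α| * ε ^ 2 ≤ β / 2) :
    β / 2 * ‖u‖ ^ 2 ≤ ‖a u u‖ := by
  have hL : |α| * nL u ^ 2 ≤ β / 2 * ‖u‖ ^ 2 :=
    calc |α| * nL u ^ 2 ≤ |α| * (ε * ‖u‖) ^ 2 := by gcongr
      _ = |α| * ε ^ 2 * ‖u‖ ^ 2 := by ring
      _ ≤ β / 2 * ‖u‖ ^ 2 := by gcongr
  have hgarding' : β * ‖u‖ ^ 2 ≤ ‖a u u‖ + |α| * nL u ^ 2 :=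
    calc β * ‖u‖ ^ 2 ≤ ‖a u u + (α * nL u ^ 2 : ℝ)‖ := hgarding
      _ ≤ ‖a u u‖ + ‖((α * nL u ^ 2 : ℝ) : ℂ)‖ := norm_add_le _ _
      _ = ‖a u u‖ + |α| * nL u ^ 2 := by
        rw [Complex.norm_real, Real.norm_eq_abs, abs_mul, abs_sq]
  linarith

theorem apply_self_eq_apply_sub_of_galerkin [AddCommGroup H] {R : Type*} [Ring R]
    [Module R H] (a : H → H → ℂ) (haddr : ∀ u v z, a u (v + z) = a u v + a u z)
    {V : Submodule R H} {w wN p : H} (hwN : wN ∈ V) (hp : p ∈ V)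
    (hGalerkin : ∀ v ∈ V, a (w - wN) v = 0) :
    a (w - wN) (w - wN) = a (w - wN) (w - p) := by
  have hsplit : w - wN = (w - p) + (p - wN) := by abel
  rw [congrArg (a (w - wN)) hsplit, haddr, hGalerkin (p - wN) (V.sub_mem hp hwN), add_zero]

theorem norm_le_of_coercive_of_apply_self_eq [SeminormedAddGroup H] (a : H → H → ℂ)
    {c M : ℝ} (hc : 0 < c) (hM : 0 ≤ M) {e d : H} (hcoercive : c * ‖e‖ ^ 2 ≤ ‖a e e‖)
    (hself : a e e = a e d) (hbdd : ‖a e d‖ ≤ M * ‖e‖ * ‖d‖) :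
    ‖e‖ ≤ M / c * ‖d‖ := by
  have hcea : c * ‖e‖ ^ 2 ≤ M * ‖e‖ * ‖d‖ := hcoercive.trans (hself ▸ hbdd)
  rw [div_mul_eq_mul_div, le_div_iff₀ hc]
  rcases (norm_nonneg e).eq_or_lt with he | he
  · rw [← he, zero_mul]; exact mul_nonneg hM (norm_nonneg d)
  · nlinarith

end GalerkinError

theorem stmt_7_general
    {H : Type*} [NormedAddCommGroup H] [InnerProductSpace ℂ H]
    (a : H → H → ℂ)
    (haddr : ∀ u v z, a u (v + z) = a u v + a u z)
    (M : ℝ) (hM : 0 < M)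
    (nL : H → ℝ) (hnL0 : ∀ u, 0 ≤ nL u)
    -- boundedness of the sesquilinear form
    (hbdd : ∀ u v, ‖a u v‖ ≤ M * ‖u‖ * ‖v‖)
    -- Gårding inequality: a(u,u) + α‖u‖²_L is coercive, the L-norm being
    -- the one of the compact embedding
    (α β : ℝ) (hβ : 0 < β)
    (hgarding : ∀ u, β * ‖u‖ ^ 2 ≤ ‖a u u + (α * nL u ^ 2 : ℝ)‖)
    -- the Galerkin spaces, solutions and projections
    (V : ℕ → Submodule ℂ H) (w : H) (wN : ℕ → H) (hwN : ∀ N, wN N ∈ V N)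
    (hGalerkin : ∀ N, ∀ v ∈ V N, a (w - wN N) v = 0)
    (ε : ℕ → ℝ) (hε : Tendsto ε atTop (nhds 0))
    (hduality : ∀ N, nL (w - wN N) ≤ ε N * ‖w - wN N‖)
    (P : ℕ → H →ₗ[ℂ] H)
    (hPrange : ∀ N x, P N x ∈ V N) :
    ∃ C > 0, ∃ N₀ : ℕ, ∀ N ≥ N₀, ‖w - wN N‖ ≤ C * ‖w - P N w‖ := by
  have hsmall : ∀ᶠ N in atTop, |α| * ε N ^ 2 ≤ β / 2 := by
    have h : Tendsto (fun N => |α| * ε N ^ 2) atTop (nhds (|α| * 0 ^ 2)) :=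
      (hε.pow 2).const_mul _
    rw [zero_pow two_ne_zero, mul_zero] at h
    exact h.eventually_le_const (by positivity)
  obtain ⟨N₀, hN₀⟩ := eventually_atTop.mp hsmall
  refine ⟨M / (β / 2), by positivity, N₀, fun N hN => ?_⟩
  exact norm_le_of_coercive_of_apply_self_eq a (by positivity) hM.le
    (half_mul_sq_norm_le_of_garding a (hgarding _) (hnL0 _) (hduality N) (hN₀ N hN))
    (apply_self_eq_apply_sub_of_galerkin a haddr (hwN N) (hPrange N w) (hGalerkin N))
    (hbdd _ _)

/-- Abstract Céa-type quasi-optimality under a Gårding inequality and an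
Aubin–Nitsche duality estimate. -/
theorem stmt_7
    {H : Type*} [NormedAddCommGroup H] [InnerProductSpace ℂ H] [CompleteSpace H]
    (a : H → H → ℂ)
    (haddl : ∀ u v z, a (u + v) z = a u z + a v z)
    (haddr : ∀ u v z, a u (v + z) = a u v + a u z)
    (hsmull : ∀ (t : ℂ) (u z : H), a (t • u) z = t * a u z)
    (hsmulr : ∀ (t : ℂ) (u z : H), a u (t • z) = (starRingEnd ℂ) t * a u z)
    (M : ℝ) (hM : 0 < M)
    (nL : H → ℝ) (hnL0 : ∀ u, 0 ≤ nL u)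
    -- boundedness of the sesquilinear form
    (hbdd : ∀ u v, ‖a u v‖ ≤ M * ‖u‖ * ‖v‖)
    -- Gårding inequality: a(u,u) + α‖u‖²_L is coercive, the L-norm being
    -- the one of the compact embedding
    (α β : ℝ) (hα : 0 < α) (hβ : 0 < β)
    (hgarding : ∀ u, β * ‖u‖ ^ 2 ≤ ‖a u u + (α * nL u ^ 2 : ℝ)‖)
    (hcompact : ∀ u, nL u ≤ ‖u‖)
    -- the Galerkin spaces, solutions and projections
    (V : ℕ → Submodule ℂ H) (w : H) (wN : ℕ → H) (hwN : ∀ N, wN N ∈ V N)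
    (hGalerkin : ∀ N, ∀ v ∈ V N, a (w - wN N) v = 0)
    (ε : ℕ → ℝ) (hε0 : ∀ N, 0 ≤ ε N) (hε : Tendsto ε atTop (nhds 0))
    (hduality : ∀ N, nL (w - wN N) ≤ ε N * ‖w - wN N‖)
    (P : ℕ → H →ₗ[ℂ] H)
    (hPrange : ∀ N x, P N x ∈ V N) (hPproj : ∀ N, ∀ v ∈ V N, P N v = v) :
    ∃ C > 0, ∃ N₀ : ℕ, ∀ N ≥ N₀, ‖w - wN N‖ ≤ C * ‖w - P N w‖ :=
  stmt_7_general a haddr M hM nL hnL0 hbdd α β hβ hgarding V w wN hwN hGalerkin ε hε hduality P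
    hPrange
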